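/- Let σ > 0, V ∈ ℝ, ψ : ℝ → ℝ continuously differentiable and 1-periodic, and let (I, ρ̄) be the unique pair with ρ̄ continuously differentiable, strictly positive, 1-periodic, ∫₀¹ ρ̄ = 1, and σ ρ̄' + ψ' ρ̄ + V ρ̄ = I. Then the mean velocity κ := V − I is nonzero if and only if V ≠ 0 and ψ is not a constant function. -/

import Mathlib

open MeasureTheory intervalIntegral

/-!
Integrating the stationary equation over a period, and integrating it again after dividing by
`ρ̄`, gives `∫₀¹ ψ' ρ̄ = I - V` and `I ∫₀¹ ρ̄⁻¹ = V`. The first shows that `κ = 0` when `ψ` is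
constant, the second that `κ = 0` when `V = 0`. Conversely, if `I = V ≠ 0` then
`∫₀¹ ρ̄ = ∫₀¹ ρ̄⁻¹ = 1`, so the nonnegative function `ρ̄ + ρ̄⁻¹ - 2 = (ρ̄ - 1)² / ρ̄` has zero
integral over a period; hence `ρ̄ ≡ 1`, and the equation reduces to `ψ' = I - V = 0`.
-/

open Function Set

theorem Function.Periodic.integral_deriv_eq_zero {f f' : ℝ → ℝ} {T : ℝ} (hf : Periodic f T)
    (hderiv : ∀ x, HasDerivAt f (f' x) x) (hint : IntervalIntegrable f' volume 0 T) :
    ∫ x in 0..T, f' x = 0 := by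
  rw [integral_eq_sub_of_hasDerivAt (fun x _ => hderiv x) hint, hf.eq, sub_self]

theorem Function.Periodic.eq_zero_of_nonneg_of_integral_eq_zero {f : ℝ → ℝ} {T : ℝ}
    (hf : Periodic f T) (hT : 0 < T) (hcont : Continuous f) (hnonneg : ∀ x, 0 ≤ f x)
    (hint : ∫ x in 0..T, f x = 0) (x : ℝ) : f x = 0 := by
  have hzero : EqOn f 0 (Ioc 0 T) :=
    Measure.eqOn_Ioc_of_ae_eq (μ := volume)
      ((integral_eq_zero_iff_of_le_of_nonneg_ae hT.le (ae_of_all _ hnonneg)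
        (hcont.intervalIntegrable 0 T)).1 hint)
      hcont.continuousOn continuousOn_const
  obtain ⟨y, hy, hxy⟩ := hf.exists_mem_Ioc hT x 0
  rw [hxy, hzero (by simpa using hy), Pi.zero_apply]

theorem Function.Periodic.eq_one_of_integral_eq_of_integral_inv_eq {ρ : ℝ → ℝ} {T : ℝ}
    (hρ : Periodic ρ T) (hT : 0 < T) (hcont : Continuous ρ) (hpos : ∀ x, 0 < ρ x)
    (hint : ∫ x in 0..T, ρ x = T) (hint_inv : ∫ x in 0..T, (ρ x)⁻¹ = T) (x : ℝ) :
    ρ x = 1 := by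
  have hcont_inv : Continuous fun x => (ρ x)⁻¹ := hcont.inv₀ fun x => (hpos x).ne'
  have hsq : ∀ x, (ρ x - 1) ^ 2 / ρ x = ρ x + (ρ x)⁻¹ - 2 := fun x => by
    field_simp [(hpos x).ne']
    ring
  have hzero : ∫ x in 0..T, (ρ x - 1) ^ 2 / ρ x = 0 := by
    simp_rw [hsq]
    rw [integral_sub (f := fun x => ρ x + (ρ x)⁻¹) ((hcont.add hcont_inv).intervalIntegrable 0 T)
        intervalIntegrable_const,
      integral_add (hcont.intervalIntegrable 0 T) (hcont_inv.intervalIntegrable 0 T), hint,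
      hint_inv, intervalIntegral.integral_const, smul_eq_mul, sub_zero]
    ring
  have hx : (ρ x - 1) ^ 2 / ρ x = 0 :=
    Periodic.eq_zero_of_nonneg_of_integral_eq_zero (f := fun x => (ρ x - 1) ^ 2 / ρ x)
      (fun x => by simp only [hρ x]) hT
      (((hcont.sub continuous_const).pow 2).div hcont fun x => (hpos x).ne')
      (fun x => div_nonneg (sq_nonneg _) (hpos x).le) hzero x
  rw [div_eq_zero_iff, or_iff_left (hpos x).ne', sq_eq_zero_iff, sub_eq_zero] at hx
  exact hx

section StationaryEquation

variable {σ V I : ℝ} {ψ ρ : ℝ → ℝ}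

theorem integral_deriv_mul_eq_of_stationary (hρ : ContDiff ℝ 1 ρ) (hρper : Periodic ρ 1)
    (hnorm : ∫ z in (0:ℝ)..1, ρ z = 1)
    (heq : ∀ z, σ * deriv ρ z + deriv ψ z * ρ z + V * ρ z = I) :
    ∫ z in (0:ℝ)..1, deriv ψ z * ρ z = I - V := by
  have hρ' : Continuous (deriv ρ) := hρ.continuous_deriv le_rfl
  have hflux : ∀ z, deriv ψ z * ρ z = I - V * ρ z - σ * deriv ρ z := fun z => by
    linarith [heq z]
  have hρ'_int : ∫ z in (0:ℝ)..1, deriv ρ z = 0 :=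
    hρper.integral_deriv_eq_zero (fun z => (hρ.differentiable one_ne_zero z).hasDerivAt)
      (hρ'.intervalIntegrable 0 1)
  simp_rw [hflux]
  rw [integral_sub (f := fun z => I - V * ρ z)
      (intervalIntegrable_const.sub ((hρ.continuous.intervalIntegrable 0 1).const_mul V))
      ((hρ'.intervalIntegrable 0 1).const_mul σ),
    integral_sub intervalIntegrable_const ((hρ.continuous.intervalIntegrable 0 1).const_mul V),
    intervalIntegral.integral_const_mul, intervalIntegral.integral_const_mul, hnorm, hρ'_int,
    intervalIntegral.integral_const, smul_eq_mul]
  ring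

theorem mul_integral_inv_eq_of_stationary (hψ : ContDiff ℝ 1 ψ) (hψper : Periodic ψ 1)
    (hρ : ContDiff ℝ 1 ρ) (hρpos : ∀ x, 0 < ρ x) (hρper : Periodic ρ 1)
    (heq : ∀ z, σ * deriv ρ z + deriv ψ z * ρ z + V * ρ z = I) :
    I * ∫ z in (0:ℝ)..1, (ρ z)⁻¹ = V := by
  have hρ' : Continuous (deriv ρ) := hρ.continuous_deriv le_rfl
  have hψ' : Continuous (deriv ψ) := hψ.continuous_deriv le_rfl
  have hlog' : IntervalIntegrable (fun z => deriv ρ z / ρ z) volume 0 1 :=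
    (hρ'.div hρ.continuous fun z => (hρpos z).ne').intervalIntegrable 0 1
  have hlog_int : ∫ z in (0:ℝ)..1, deriv ρ z / ρ z = 0 :=
    (hρper.comp Real.log).integral_deriv_eq_zero
      (fun z => (hρ.differentiable one_ne_zero z).hasDerivAt.log (hρpos z).ne') hlog'
  have hψ'_int : ∫ z in (0:ℝ)..1, deriv ψ z = 0 :=
    hψper.integral_deriv_eq_zero (fun z => (hψ.differentiable one_ne_zero z).hasDerivAt)
      (hψ'.intervalIntegrable 0 1)
  have hdiv : ∀ z, I * (ρ z)⁻¹ = σ * (deriv ρ z / ρ z) + deriv ψ z + V := fun z => by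
    rw [← heq z]
    field_simp [(hρpos z).ne']
  calc I * ∫ z in (0:ℝ)..1, (ρ z)⁻¹
      = ∫ z in (0:ℝ)..1, (σ * (deriv ρ z / ρ z) + deriv ψ z + V) := by
        rw [← intervalIntegral.integral_const_mul]
        simp_rw [hdiv]
    _ = V := by
      rw [integral_add (f := fun z => σ * (deriv ρ z / ρ z) + deriv ψ z)
          ((hlog'.const_mul σ).add (hψ'.intervalIntegrable 0 1)) intervalIntegrable_const,
        integral_add (f := fun z => σ * (deriv ρ z / ρ z)) (hlog'.const_mul σ)
          (hψ'.intervalIntegrable 0 1),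
        intervalIntegral.integral_const_mul, hlog_int, hψ'_int, intervalIntegral.integral_const,
        smul_eq_mul]
      ring

end StationaryEquation

theorem stmt4_general (σ V I : ℝ) (ψ : ℝ → ℝ)
    (hψ : ContDiff ℝ 1 ψ) (hψper : ∀ x, ψ (x + 1) = ψ x)
    (ρ : ℝ → ℝ) (hρ : ContDiff ℝ 1 ρ) (hρpos : ∀ x, 0 < ρ x)
    (hρper : ∀ x, ρ (x + 1) = ρ x)
    (hnorm : (∫ z in (0:ℝ)..1, ρ z) = 1)
    (heq : ∀ z, σ * deriv ρ z + deriv ψ z * ρ z + V * ρ z = I) :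
    V - I ≠ 0 ↔ (V ≠ 0 ∧ ¬ ∃ c : ℝ, ∀ x, ψ x = c) := by
  have hflux := integral_deriv_mul_eq_of_stationary hρ hρper hnorm heq
  have hresp := mul_integral_inv_eq_of_stationary hψ hψper hρ hρpos hρper heq
  have hinv_pos : 0 < ∫ z in (0:ℝ)..1, (ρ z)⁻¹ :=
    intervalIntegral_pos_of_pos
      ((hρ.continuous.inv₀ fun z => (hρpos z).ne').intervalIntegrable 0 1)
      (fun z => inv_pos.2 (hρpos z)) one_pos
  constructor
  · refine fun hκ => ⟨fun hV => hκ ?_, fun ⟨c, hc⟩ => hκ ?_⟩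
    · rw [hV, mul_eq_zero, or_iff_left hinv_pos.ne'] at hresp
      rw [hV, hresp, sub_zero]
    · simp only [funext hc, deriv_const', zero_mul, intervalIntegral.integral_zero] at hflux
      linarith
  · rintro ⟨hV, hψ_nonconst⟩ hκ
    have hIV : I = V := by linarith
    have hinv_one : ∫ z in (0:ℝ)..1, (ρ z)⁻¹ = 1 := by
      rw [hIV] at hresp
      exact mul_left_cancel₀ hV (hresp.trans (mul_one V).symm)
    have hρ_one : ρ = fun _ => 1 := funext <|
      Periodic.eq_one_of_integral_eq_of_integral_inv_eq hρper one_pos hρ.continuous hρpos hnorm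
        hinv_one
    have hψ' : ∀ x, deriv ψ x = 0 := fun x => by
      have := heq x
      simp only [hρ_one, deriv_const', mul_zero, mul_one, zero_add] at this
      linarith
    exact hψ_nonconst
      ⟨ψ 0, fun x => is_const_of_deriv_eq_zero (hψ.differentiable one_ne_zero) hψ' x 0⟩

/-- Proposition 1: the process is a transport process (`κ = V - I ≠ 0`)
if and only if the applied voltage `V` is nonzero and the driving potential
`ψ` is not a constant. -/
theorem stmt4 (σ V I : ℝ) (hσ : 0 < σ) (ψ : ℝ → ℝ)
    (hψ : ContDiff ℝ 1 ψ) (hψper : ∀ x, ψ (x + 1) = ψ x)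
    (ρ : ℝ → ℝ) (hρ : ContDiff ℝ 1 ρ) (hρpos : ∀ x, 0 < ρ x)
    (hρper : ∀ x, ρ (x + 1) = ρ x)
    (hnorm : (∫ z in (0:ℝ)..1, ρ z) = 1)
    (heq : ∀ z, σ * deriv ρ z + deriv ψ z * ρ z + V * ρ z = I) :
    V - I ≠ 0 ↔ (V ≠ 0 ∧ ¬ ∃ c : ℝ, ∀ x, ψ x = c) :=
  stmt4_general σ V I ψ hψ hψper ρ hρ hρpos hρper hnorm heq
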